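/- arXiv:2509.14835 — 6 statements merged into one kernel-verified Lean document; each statement's English description precedes it below -/
import Mathlib

section
/- Assume ω(e) ≤ t ≤ ⌊rᵢ/2⌋ for i = 1,2, U is the syndrome table afforded by τ and e, the monomial ordering ≤_T is the lexicographic order with X₁ > X₂, and S(t) satisfies the l-condition. If l = (l₁,l₂) is the ≤_T-first element of ℕ×ℕ for which u_l ≠ 0, then {X₁, X₂^{l₂+1}} is a minimal set of polynomials for u^{l+1}, where l+1 denotes the successor of l in the lexicographic ordering, defined by l+1 = (l₁, l₂+1) if l₂ < r₂−1 and l+1 = (l₁+1, 0) if l₂ = r₂−1. -/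
open scoped BigOperators

namespace BMS

/-- Index pairs in ℕ × ℕ. -/
abbrev Pair : Type := ℕ × ℕ

/-- The componentwise partial order `⪯` on ℕ×ℕ. -/
def Preceq (n m : Pair) : Prop := n.1 ≤ m.1 ∧ n.2 ≤ m.2

instance (n m : Pair) : Decidable (Preceq n m) :=
  inferInstanceAs (Decidable (n.1 ≤ m.1 ∧ n.2 ≤ m.2))

/-- The lexicographic order on exponents, with `X₁ > X₂`. -/
def LexLt (a b : Pair) : Prop := a.1 < b.1 ∨ (a.1 = b.1 ∧ a.2 < b.2)

/-- The graded order on exponents, with `X₂ > X₁`. -/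
def GrLt (a b : Pair) : Prop :=
  a.1 + a.2 < b.1 + b.2 ∨ (a.1 + a.2 = b.1 + b.2 ∧ a.2 < b.2)

section
variable {L : Type*} [Field L]

/-- `s` is the `lt`-largest exponent occurring in (the support of) the polynomial `f`,
i.e. `LP f = s`. -/
def IsLP (lt : Pair → Pair → Prop) (f : Pair →₀ L) (s : Pair) : Prop :=
  s ∈ f.support ∧ ∀ m ∈ f.support, m = s ∨ lt m s

/-- The value `f[U]_n`, where `s = LP f`. -/
def evalArr (U : Pair → L) (f : Pair →₀ L) (s n : Pair) : L :=
  if Preceq s n then ∑ m ∈ f.support, f m * U (m.1 + n.1 - s.1, m.2 + n.2 - s.2) else 0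

/-- `f` (with `LP f = s`) generates the finite subarray `u^l`,
i.e. `f[U]_k = 0` for every `k` with `LP f ⪯ k` and `k <_T l`. -/
def GeneratesUpTo (lt : Pair → Pair → Prop) (U : Pair → L) (f : Pair →₀ L)
    (s l : Pair) : Prop :=
  ∀ k : Pair, Preceq s k → lt k l → evalArr U f s k = 0

/-- `f` generates the whole doubly periodic array `U`, i.e. `f ∈ Λ(U)`
(the zero polynomial generates `U` by convention). -/
def GeneratesTable (lt : Pair → Pair → Prop) (U : Pair → L) (f : Pair →₀ L) : Prop :=
  f = 0 ∨ ∃ s : Pair, IsLP lt f s ∧ ∀ n : Pair, Preceq s n → evalArr U f s n = 0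

/-- The footprint `Δ(F)` determined by the defining points `s 0, …, s (d-1)`:
`Δ(F) = ⋃_{i=1}^{d-1} Δ_{(s₁⁽ⁱ⁾ - 1, s₂⁽ⁱ⁺¹⁾ - 1)}`. -/
def DeltaF (d : ℕ) (s : Fin d → Pair) : Set Pair :=
  {n | ∃ i : Fin d, ∃ h : (i : ℕ) + 1 < d,
    n.1 < (s i).1 ∧ n.2 < (s ⟨(i : ℕ) + 1, h⟩).2}

/-- `{f 0, …, f (d-1)}`, with `LP (f i) = s i`, is a minimal set of polynomials
for the subarray `u^l`. -/
structure IsMinimalSet (lt : Pair → Pair → Prop) (U : Pair → L) (l : Pair) (d : ℕ)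
    (f : Fin d → (Pair →₀ L)) (s : Fin d → Pair) : Prop where
  isLP : ∀ i, IsLP lt (f i) (s i)
  gen : ∀ i, GeneratesUpTo lt U (f i) (s i) l
  anti1 : ∀ i j : Fin d, i < j → (s j).1 < (s i).1
  mono2 : ∀ i j : Fin d, i < j → (s i).2 < (s j).2
  last1 : ∀ h : 0 < d, (s ⟨d - 1, Nat.sub_lt h Nat.one_pos⟩).1 = 0
  first2 : ∀ h : 0 < d, (s ⟨0, h⟩).2 = 0
  minimal : ∀ (g : Pair →₀ L) (sg : Pair), IsLP lt g sg → sg ∈ DeltaF d s →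
    ¬ GeneratesUpTo lt U g sg l

/-- A finite set `G ⊆ Λ(U)` is a Groebner basis for the ideal `Λ(U)` w.r.t. `lt`:
for every nonzero `f ∈ Λ(U)` there is `g ∈ G` with `X^{LP g} ∣ X^{LP f}`. -/
def IsGroebnerBasis (lt : Pair → Pair → Prop) (U : Pair → L)
    (G : Set (Pair →₀ L)) : Prop :=
  G.Finite ∧ (∀ g ∈ G, GeneratesTable lt U g) ∧
  ∀ fp : Pair →₀ L, fp ≠ 0 → GeneratesTable lt U fp →
    ∀ sf : Pair, IsLP lt fp sf → ∃ g ∈ G, ∃ sg : Pair, IsLP lt g sg ∧ Preceq sg sf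

/-- `c • X^a * g` : multiply the polynomial `g` by the monomial `c·X₁^{a.1}·X₂^{a.2}`. -/
noncomputable def shiftScale (c : L) (a : Pair) (g : Pair →₀ L) : Pair →₀ L :=
  c • Finsupp.mapDomain (· + a) g

/-- The set of indexes `S(t)`. -/
def Sset (t : ℕ) : Set Pair :=
  {p | (p.1 = 0 ∧ p.2 ≤ 2 * t - 1) ∨ (p.2 = 0 ∧ p.1 ≤ 2 * t - 1) ∨
    (p.1 ≠ 0 ∧ p.2 ≠ 0 ∧ p.1 + p.2 ≤ t)}

/-- `S(t)` satisfies the l-condition: `u_{(0,j)} ≠ 0` for some `j < t`. -/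
def LCond (U : Pair → L) (t : ℕ) : Prop := ∃ j : ℕ, j < t ∧ U (0, j) ≠ 0

/-- `S(t)` satisfies the g-condition: `u_{(i,j)} ≠ 0` for some `(i,j)` with `i + j = 1`. -/
def GCond (U : Pair → L) (t : ℕ) : Prop := ∃ p : Pair, p.1 + p.2 = 1 ∧ U p ≠ 0

end

section
variable {F L : Type*} [Field F] [Field L] [Algebra F L]

/-- Evaluation of (the canonical representative of) `e ∈ 𝔽(r₁,r₂)` at a point of `L × L`. -/
def polyEval (e : Pair →₀ F) (x y : L) : L :=
  ∑ m ∈ e.support, algebraMap F L (e m) * x ^ m.1 * y ^ m.2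

/-- `U` is the syndrome table afforded by `τ` and `e`:
`u_n = e(α₁^{τ₁+n₁}, α₂^{τ₂+n₂})`, where `e` is a canonical representative
(exponents below `(r₁, r₂)`) and `τ ∈ ℤ_{r₁} × ℤ_{r₂}`. -/
def IsSyndromeTable (r₁ r₂ : ℕ) (α₁ α₂ : L) (τ : Pair) (e : Pair →₀ F)
    (U : Pair → L) : Prop :=
  (∀ m ∈ e.support, m.1 < r₁ ∧ m.2 < r₂) ∧ τ.1 < r₁ ∧ τ.2 < r₂ ∧
  ∀ n : Pair, U n = polyEval e (α₁ ^ (τ.1 + n.1)) (α₂ ^ (τ.2 + n.2))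

/-- Basic data of the general assumption: `q` a prime power, `𝔽 = 𝔽_q`,
`gcd(q, r₁r₂) = 1`, `αᵢ` a primitive `rᵢ`-th root of unity in the extension `𝕃`,
`U` the syndrome table afforded by `τ` and `e`, and `ω(e) ≤ t ≤ ⌊rᵢ/2⌋`. -/
structure Setup (q r₁ r₂ t : ℕ) {F L : Type*} [Field F] [Fintype F] [Field L]
    [Algebra F L] (α₁ α₂ : L) (τ : Pair) (e : Pair →₀ F) (U : Pair → L) : Prop where
  prime_pow : ∃ p n : ℕ, p.Prime ∧ 0 < n ∧ q = p ^ n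
  card_F : Fintype.card F = q
  coprime : Nat.Coprime q (r₁ * r₂)
  prim1 : IsPrimitiveRoot α₁ r₁
  prim2 : IsPrimitiveRoot α₂ r₂
  syndrome : IsSyndromeTable r₁ r₂ α₁ α₂ τ e U
  weight_le : e.support.card ≤ t
  t_le1 : t ≤ r₁ / 2
  t_le2 : t ≤ r₂ / 2

end



/-- first nonzero syndrome value under the lexicographic ordering. -/
theorem statement1 {q r₁ r₂ t : ℕ} {F L : Type*} [Field F] [Fintype F] [Field L]
    [Algebra F L] {α₁ α₂ : L} {τ : Pair} {e : Pair →₀ F} {U : Pair → L}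
    (hsetup : Setup q r₁ r₂ t α₁ α₂ τ e U)
    (hlcond : LCond U t)
    {l : Pair} (hne : U l ≠ 0) (hfirst : ∀ m : Pair, LexLt m l → U m = 0) :
    IsMinimalSet LexLt U (if l.2 < r₂ - 1 then (l.1, l.2 + 1) else (l.1 + 1, 0)) 2
      ![Finsupp.single ((1, 0) : Pair) (1 : L), Finsupp.single ((0, l.2 + 1) : Pair) (1 : L)]
      ![((1, 0) : Pair), ((0, l.2 + 1) : Pair)] := by
  obtain ⟨j, hjt, hUj⟩ := hlcond
  have hl1 : l.1 = 0 := by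
    by_contra h
    exact hUj (hfirst (0, j) (Or.inl (Nat.pos_of_ne_zero h)))
  have hl2j : l.2 ≤ j := by
    by_contra h
    exact hUj (hfirst (0, j) (Or.inr ⟨hl1.symm, Nat.lt_of_not_le h⟩))
  have hr2 : 0 < r₂ := by
    by_contra h
    have h0 : r₂ = 0 := by omega
    have hc := hsetup.coprime
    rw [h0, Nat.mul_zero, Nat.coprime_zero_right] at hc
    obtain ⟨p, n, hp, hn, hq⟩ := hsetup.prime_pow
    rw [hc] at hq
    have h1 : 1 < p ^ n := Nat.one_lt_pow (by omega) hp.one_lt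
    omega
  have ht2 := hsetup.t_le2
  have hl2 : l.2 < r₂ - 1 := by
    have hd : r₂ / 2 < r₂ := Nat.div_lt_self hr2 one_lt_two
    omega
  rw [if_pos hl2]
  have hsupp1 : (Finsupp.single ((1, 0) : Pair) (1 : L)).support = {((1, 0) : Pair)} :=
    Finsupp.support_single_ne_zero _ one_ne_zero
  have hsupp2 : (Finsupp.single ((0, l.2 + 1) : Pair) (1 : L)).support
      = {((0, l.2 + 1) : Pair)} :=
    Finsupp.support_single_ne_zero _ one_ne_zero
  constructor
  · -- isLP
    intro i
    fin_cases i
    · refine ⟨?_, ?_⟩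
      · simp [hsupp1]
      · intro m hm
        left
        simpa [hsupp1] using hm
    · refine ⟨?_, ?_⟩
      · simp [hsupp2]
      · intro m hm
        left
        simpa [hsupp2] using hm
  · -- gen
    intro i
    fin_cases i
    · intro k hpre hlt
      exfalso
      have hpre' : ((1, 0) : Pair).1 ≤ k.1 ∧ ((1, 0) : Pair).2 ≤ k.2 := hpre
      obtain ⟨h1, h2⟩ := hpre'
      simp only at h1
      rcases hlt with h | ⟨h, h'⟩ <;> simp only at h <;> omega
    · intro k hpre hlt
      exfalso
      have hpre' : ((0, l.2 + 1) : Pair).1 ≤ k.1 ∧ ((0, l.2 + 1) : Pair).2 ≤ k.2 := hpre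
      obtain ⟨h1, h2⟩ := hpre'
      simp only at h2
      rcases hlt with h | ⟨h, h'⟩
      · simp only at h; omega
      · simp only at h h'; omega
  · -- anti1
    intro i i' hij
    fin_cases i <;> fin_cases i' <;> simp_all
  · -- mono2
    intro i i' hij
    fin_cases i <;> fin_cases i' <;> simp_all
  · -- last1
    intro h
    rfl
  · -- first2
    intro h
    rfl
  · -- minimal
    intro g sg hLP hΔ hgen
    obtain ⟨i, hi, h1, h2⟩ := hΔ
    have hv : (i : ℕ) = 0 := by omega
    have h1' : sg.1 < 1 := by
      rw [show i = (0 : Fin 2) from Fin.ext hv] at h1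
      simpa using h1
    have h2' : sg.2 < l.2 + 1 := by
      have he : (⟨(i : ℕ) + 1, hi⟩ : Fin 2) = 1 := Fin.ext (by simp [hv])
      rw [he] at h2
      simpa using h2
    have hsg1 : sg.1 = 0 := by omega
    have hpre : Preceq sg (0, l.2) := ⟨by omega, by omega⟩
    have hkey := hgen (0, l.2) hpre (Or.inr ⟨hl1.symm, Nat.lt_succ_self _⟩)
    rw [evalArr, if_pos hpre] at hkey
    rw [Finset.sum_eq_single_of_mem sg hLP.1 ?_] at hkey
    · have hlpair : (sg.1 + ((0 : ℕ), l.2).1 - sg.1, sg.2 + ((0 : ℕ), l.2).2 - sg.2) = l := by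
        ext
        · show sg.1 + 0 - sg.1 = l.1
          omega
        · show sg.2 + l.2 - sg.2 = l.2
          omega
      rw [hlpair] at hkey
      have hgne : g sg ≠ 0 := Finsupp.mem_support_iff.mp hLP.1
      exact hne ((mul_eq_zero.mp hkey).resolve_left hgne)
    · intro m hm hne'
      rcases hLP.2 m hm with h | h
      · exact absurd h hne'
      · rcases h with h | ⟨heq, hlt'⟩
        · exact absurd h (by omega)
        · have hz : U (m.1 + ((0 : ℕ), l.2).1 - sg.1, m.2 + ((0 : ℕ), l.2).2 - sg.2) = 0 := by
            apply hfirst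
            right
            refine ⟨?_, ?_⟩
            · show m.1 + 0 - sg.1 = l.1
              omega
            · show m.2 + l.2 - sg.2 < l.2
              omega
          rw [hz, mul_zero]

end BMS
end

section
/- Assume ω(e) ≤ t ≤ ⌊rᵢ/2⌋ for i = 1,2, U is the syndrome table afforded by τ and e, the monomial ordering ≤_T is the graded order with X₂ > X₁, and S(t) satisfies the g-condition. If l = (l₁,l₂) is the ≤_T-first element of ℕ×ℕ for which u_l ≠ 0, then {X₁^{l₁+1}, X₂^{l₂+1}} is a minimal set of polynomials for u^{l+1}, where l+1 denotes the successor of l in the graded ordering, defined by l+1 = (l₁−1, l₂+1) if l₁ > 0 and l+1 = (l₂+1, 0) if l₁ = 0. -/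
open scoped BigOperators

namespace BMS

/-- first nonzero syndrome value under the graded ordering. -/
theorem statement2 {q r₁ r₂ t : ℕ} {F L : Type*} [Field F] [Fintype F] [Field L]
    [Algebra F L] {α₁ α₂ : L} {τ : Pair} {e : Pair →₀ F} {U : Pair → L}
    (hsetup : Setup q r₁ r₂ t α₁ α₂ τ e U)
    (hgcond : GCond U t)
    {l : Pair} (hne : U l ≠ 0) (hfirst : ∀ m : Pair, GrLt m l → U m = 0) :
    IsMinimalSet GrLt U (if 0 < l.1 then (l.1 - 1, l.2 + 1) else (l.2 + 1, 0)) 2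
      ![Finsupp.single ((l.1 + 1, 0) : Pair) (1 : L),
        Finsupp.single ((0, l.2 + 1) : Pair) (1 : L)]
      ![((l.1 + 1, 0) : Pair), ((0, l.2 + 1) : Pair)] := by
  have hone : (1 : L) ≠ 0 := one_ne_zero
  set l' : Pair := if 0 < l.1 then (l.1 - 1, l.2 + 1) else (l.2 + 1, 0) with hl'
  have hgrl : GrLt l l' := by
    rcases Nat.eq_zero_or_pos l.1 with h | h
    · rw [hl', if_neg (by omega)]; unfold GrLt; simp; omega
    · rw [hl', if_pos h]; unfold GrLt; simp; omega
  have hsucc : ∀ k : Pair, GrLt k l' → ¬(k.1 = l.1 ∧ k.2 = l.2) → GrLt k l := by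
    intro k hk hkl
    rcases Nat.eq_zero_or_pos l.1 with h | h
    · rw [hl', if_neg (by omega)] at hk; unfold GrLt at hk ⊢; omega
    · rw [hl', if_pos h] at hk; unfold GrLt at hk ⊢; omega
  have heval : ∀ (a k : Pair), Preceq a k →
      evalArr U (Finsupp.single a (1 : L)) a k = U k := by
    intro a k hk
    rw [evalArr, if_pos hk, Finsupp.support_single_ne_zero _ hone, Finset.sum_singleton,
      Finsupp.single_eq_same, one_mul]
    congr 1
    exact Prod.ext (by omega) (by omega)
  have hLP : ∀ a : Pair, IsLP GrLt (Finsupp.single a (1 : L)) a := by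
    intro a
    constructor
    · rw [Finsupp.support_single_ne_zero _ hone]; exact Finset.mem_singleton_self a
    · intro m hm
      rw [Finsupp.support_single_ne_zero _ hone, Finset.mem_singleton] at hm
      exact Or.inl hm
  refine
    { isLP := ?_, gen := ?_, anti1 := ?_, mono2 := ?_, last1 := ?_, first2 := ?_,
      minimal := ?_ }
  · intro i
    fin_cases i <;> simp only [Matrix.cons_val_zero, Matrix.cons_val_one, Matrix.head_cons] <;>
      exact hLP _
  · intro i
    fin_cases i <;>
      simp only [Fin.zero_eta, Fin.mk_one, Matrix.cons_val_zero, Matrix.cons_val_one,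
        Matrix.head_cons] <;>
      intro k hpre hk <;> rw [heval _ _ hpre] <;>
      exact hfirst k (hsucc k hk (by rcases hpre with ⟨h1, h2⟩; simp at h1 h2 ⊢; omega))
  · intro i j hij
    fin_cases i <;> fin_cases j <;> simp_all <;> omega
  · intro i j hij
    fin_cases i <;> fin_cases j <;> simp_all <;> omega
  · intro h; simp
  · intro h; simp
  · intro g sg hlp hsg hgen
    obtain ⟨i, hi, h1, h2⟩ := hsg
    have hi0 : i = (0 : Fin 2) := Fin.ext (by omega)
    subst hi0
    have hmk : (⟨(0 : Fin 2).1 + 1, hi⟩ : Fin 2) = 1 := rfl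
    rw [hmk] at h2
    simp only [Matrix.cons_val_zero, Matrix.cons_val_one, Matrix.head_cons] at h1 h2
    have hs1 : sg.1 ≤ l.1 := by omega
    have hs2 : sg.2 ≤ l.2 := by omega
    refine absurd (hgen l ⟨hs1, hs2⟩ hgrl) ?_
    rw [evalArr, if_pos ⟨hs1, hs2⟩]
    rw [Finset.sum_eq_single sg]
    · have hidx : ((sg.1 + l.1 - sg.1, sg.2 + l.2 - sg.2) : Pair) = l :=
        Prod.ext (by omega) (by omega)
      rw [hidx]
      exact mul_ne_zero (Finsupp.mem_support_iff.mp hlp.1) hne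
    · intro m hm hmne
      rcases hlp.2 m hm with h | h
      · exact absurd h hmne
      · have hz : U (m.1 + l.1 - sg.1, m.2 + l.2 - sg.2) = 0 := by
          apply hfirst
          unfold GrLt at h ⊢
          omega
        rw [hz, mul_zero]
    · intro hsg'
      exact absurd hlp.1 hsg'

end BMS
end

section
/- Under the General Assumption, suppose l₁ ≠ 0, l₂ ≠ 0, l₁ + l₂ = t, and d ≥ 4. Then there exists i ∈ {1, d} such that LP(f^(i)) ⪯ l and f^(i)[U]_l = 0. -/
open scoped BigOperators

namespace BMS

section Aux

variable {L : Type*} [Field L]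

lemma preceq_mk {a : Pair} {x y : ℕ} (h1 : a.1 ≤ x) (h2 : a.2 ≤ y) : Preceq a (x, y) :=
  ⟨h1, h2⟩

lemma lt_total_of {lt : Pair → Pair → Prop} (h : lt = LexLt ∨ lt = GrLt) :
    ∀ a b : Pair, a = b ∨ lt a b ∨ lt b a := by
  rcases h with rfl | rfl <;> intro a b <;>
    simp only [LexLt, GrLt, Prod.ext_iff] <;> omega

lemma lt_trans_of {lt : Pair → Pair → Prop} (h : lt = LexLt ∨ lt = GrLt) :
    ∀ a b c : Pair, lt a b → lt b c → lt a c := by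
  rcases h with rfl | rfl <;> intro a b c h1 h2 <;>
    simp only [LexLt, GrLt] at * <;> omega

lemma lt_transl_of {lt : Pair → Pair → Prop} (h : lt = LexLt ∨ lt = GrLt) :
    ∀ (a b : Pair) (c₁ c₂ : ℕ), lt a b → lt (a.1 + c₁, a.2 + c₂) (b.1 + c₁, b.2 + c₂) := by
  rcases h with rfl | rfl <;> intro a b c₁ c₂ h1 <;>
    simp only [LexLt, GrLt] at * <;> omega

lemma exists_lt_max {lt : Pair → Pair → Prop}
    (htot : ∀ a b : Pair, a = b ∨ lt a b ∨ lt b a)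
    (htr : ∀ a b c : Pair, lt a b → lt b c → lt a c)
    (T : Finset Pair) : T.Nonempty → ∃ v ∈ T, ∀ m ∈ T, m = v ∨ lt m v := by
  classical
  induction T using Finset.induction_on with
  | empty => rintro ⟨x, hx⟩; simp at hx
  | @insert a T' ha ih =>
    intro _
    rcases T'.eq_empty_or_nonempty with rfl | hne
    · refine ⟨a, Finset.mem_insert_self a ∅, ?_⟩
      intro m hm
      simp only [Finset.mem_insert, Finset.notMem_empty, or_false] at hm
      exact Or.inl hm
    · obtain ⟨v, hv, hmax⟩ := ih hne
      rcases htot a v with rfl | hav | hva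
      · exact absurd hv ha
      · refine ⟨v, Finset.mem_insert_of_mem hv, ?_⟩
        intro m hm
        rcases Finset.mem_insert.mp hm with rfl | hm'
        · exact Or.inr hav
        · exact hmax m hm'
      · refine ⟨a, Finset.mem_insert_self a T', ?_⟩
        intro m hm
        rcases Finset.mem_insert.mp hm with rfl | hm'
        · exact Or.inl rfl
        · rcases hmax m hm' with rfl | hmv
          · exact Or.inr hva
          · exact Or.inr (htr m v a hmv hva)

/-- `g` vanishes at all the points `(α₁^{m₁}, α₂^{m₂})`, `m ∈ E`. -/
def Vanishes (α₁ α₂ : L) (E : Finset Pair) (g : Pair →₀ L) : Prop :=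
  ∀ m ∈ E, ∑ p ∈ g.support, g p * (α₁ ^ m.1) ^ p.1 * (α₂ ^ m.2) ^ p.2 = 0

/-- `v` belongs to the footprint of the ideal of the point set: no nonzero polynomial
vanishing on the points has leading power `v`. -/
def Dstar (lt : Pair → Pair → Prop) (α₁ α₂ : L) (E : Finset Pair) (v : Pair) : Prop :=
  ∀ g : Pair →₀ L, IsLP lt g v → Vanishes α₁ α₂ E g → False

lemma dstar_card_le {lt : Pair → Pair → Prop}
    (htot : ∀ a b : Pair, a = b ∨ lt a b ∨ lt b a)
    (htr : ∀ a b c : Pair, lt a b → lt b c → lt a c)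
    (α₁ α₂ : L) (E T : Finset Pair)
    (hT : ∀ v ∈ T, Dstar lt α₁ α₂ E v) : T.card ≤ E.card := by
  classical
  have hli : LinearIndependent L (fun (v : {x // x ∈ T}) (m : {x // x ∈ E}) =>
      (α₁ ^ (m : Pair).1) ^ (v : Pair).1 * (α₂ ^ (m : Pair).2) ^ (v : Pair).2) := by
    rw [Fintype.linearIndependent_iff]
    intro cc hcc
    by_contra hne
    push_neg at hne
    obtain ⟨i₀, hi₀⟩ := hne
    set G : Pair →₀ L := Finsupp.onFinset T (fun p => if h : p ∈ T then cc ⟨p, h⟩ else 0)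
      (fun p hp => by by_contra h; exact hp (by simp [h])) with hGdef
    have hGapp : ∀ i : {x // x ∈ T}, G ↑i = cc i := by
      intro i
      rw [hGdef, Finsupp.onFinset_apply, dif_pos i.2, Subtype.coe_eta]
    have hGsupp : G.support ⊆ T := Finsupp.support_onFinset_subset
    have hi₀mem : (i₀ : Pair) ∈ G.support := by
      rw [Finsupp.mem_support_iff, hGapp i₀]; exact hi₀
    obtain ⟨v, hvmem, hvmax⟩ := exists_lt_max htot htr G.support ⟨_, hi₀mem⟩
    refine hT v (hGsupp hvmem) G ⟨hvmem, hvmax⟩ ?_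
    intro m hm
    have hext : ∑ p ∈ G.support, G p * (α₁ ^ m.1) ^ p.1 * (α₂ ^ m.2) ^ p.2
        = ∑ p ∈ T, G p * (α₁ ^ m.1) ^ p.1 * (α₂ ^ m.2) ^ p.2 :=
      Finset.sum_subset hGsupp (fun p _ hp => by
        rw [Finsupp.notMem_support_iff.mp hp, zero_mul, zero_mul])
    rw [hext, ← Finset.sum_attach T (fun p => G p * (α₁ ^ m.1) ^ p.1 * (α₂ ^ m.2) ^ p.2)]
    rw [Finset.univ_eq_attach] at hcc
    have h2 := congrFun hcc ⟨m, hm⟩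
    rw [Finset.sum_apply] at h2
    refine Eq.trans (Finset.sum_congr rfl fun i _ => ?_) h2
    rw [hGapp i]
    simp only [Pi.smul_apply, smul_eq_mul]
    ring
  have h3 := hli.fintype_card_le_finrank
  rwa [Module.finrank_pi, Fintype.card_coe, Fintype.card_coe] at h3

end Aux
section Aux2

variable {L : Type*} [Field L]

lemma contra_count {lt : Pair → Pair → Prop} {α₁ α₂ : L} {E : Finset Pair}
    (htot : ∀ a b : Pair, a = b ∨ lt a b ∨ lt b a)
    (htr : ∀ a b c : Pair, lt a b → lt b c → lt a c)
    (t : ℕ) (hE : E.card ≤ t)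
    (N : ℕ) (hN : t < N) (ψ : ℕ → Pair)
    (hinj : ∀ k < N, ∀ k' < N, ψ k = ψ k' → k = k')
    (hmem : ∀ k < N, Dstar lt α₁ α₂ E (ψ k)) : False := by
  classical
  have h1 := dstar_card_le htot htr α₁ α₂ E ((Finset.range N).image ψ) (by
    intro v hv
    obtain ⟨k, hk, rfl⟩ := Finset.mem_image.mp hv
    exact hmem k (Finset.mem_range.mp hk))
  rw [Finset.card_image_of_injOn (fun k hk k' hk' h =>
    hinj k (by simpa using hk) k' (by simpa using hk') h), Finset.card_range] at h1
  omega

variable {F : Type*} [Field F] [Algebra F L]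

lemma vanishes_gen {r₁ r₂ : ℕ} {α₁ α₂ : L}
    {τ : Pair} {e : Pair →₀ F} {U : Pair → L}
    (hsyn : IsSyndromeTable r₁ r₂ α₁ α₂ τ e U)
    {g : Pair →₀ L} (hg : Vanishes α₁ α₂ e.support g) (v₁ v₂ n₁ n₂ : ℕ)
    (h1 : v₁ ≤ n₁) (h2 : v₂ ≤ n₂) :
    ∑ p ∈ g.support, g p * U (p.1 + n₁ - v₁, p.2 + n₂ - v₂) = 0 := by
  have hUp : ∀ x y : ℕ, U (x, y) = ∑ m ∈ e.support,
      algebraMap F L (e m) * (α₁ ^ (τ.1 + x)) ^ m.1 * (α₂ ^ (τ.2 + y)) ^ m.2 := by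
    intro x y
    rw [hsyn.2.2.2 (x, y)]
    simp [polyEval]
  calc ∑ p ∈ g.support, g p * U (p.1 + n₁ - v₁, p.2 + n₂ - v₂)
      = ∑ p ∈ g.support, ∑ m ∈ e.support,
          (algebraMap F L (e m) * (α₁ ^ (τ.1 + (n₁ - v₁))) ^ m.1 *
            (α₂ ^ (τ.2 + (n₂ - v₂))) ^ m.2)
          * (g p * (α₁ ^ m.1) ^ p.1 * (α₂ ^ m.2) ^ p.2) := by
        refine Finset.sum_congr rfl fun p _ => ?_
        rw [hUp, Finset.mul_sum]
        refine Finset.sum_congr rfl fun m _ => ?_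
        rw [show τ.1 + (p.1 + n₁ - v₁) = (τ.1 + (n₁ - v₁)) + p.1 by omega,
            show τ.2 + (p.2 + n₂ - v₂) = (τ.2 + (n₂ - v₂)) + p.2 by omega,
            pow_add, pow_add, mul_pow, mul_pow]
        ring
    _ = ∑ m ∈ e.support, (algebraMap F L (e m) * (α₁ ^ (τ.1 + (n₁ - v₁))) ^ m.1 *
          (α₂ ^ (τ.2 + (n₂ - v₂))) ^ m.2) *
          ∑ p ∈ g.support, g p * (α₁ ^ m.1) ^ p.1 * (α₂ ^ m.2) ^ p.2 := by
        rw [Finset.sum_comm]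
        exact Finset.sum_congr rfl fun m _ => (Finset.mul_sum _ _ _).symm
    _ = 0 := Finset.sum_eq_zero fun m hm => by rw [hg m hm, mul_zero]

lemma dstar_of_deltaF {r₁ r₂ : ℕ} {α₁ α₂ : L}
    {τ : Pair} {e : Pair →₀ F} {U : Pair → L} {lt : Pair → Pair → Prop} {l : Pair}
    {d : ℕ} {f : Fin d → (Pair →₀ L)} {s : Fin d → Pair}
    (hsyn : IsSyndromeTable r₁ r₂ α₁ α₂ τ e U)
    (hmin : IsMinimalSet lt U l d f s) {v : Pair} (hv : v ∈ DeltaF d s) :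
    Dstar lt α₁ α₂ e.support v := by
  intro g hLP hvan
  refine hmin.minimal g v hLP hv fun k hk _ => ?_
  simp only [evalArr]
  rw [if_pos hk]
  exact vanishes_gen hsyn hvan v.1 v.2 k.1 k.2 hk.1 hk.2

lemma dstar_of_disc {r₁ r₂ : ℕ} {α₁ α₂ : L}
    {τ : Pair} {e : Pair →₀ F} {U : Pair → L} {lt : Pair → Pair → Prop} {l : Pair}
    (htransl : ∀ (a b : Pair) (c₁ c₂ : ℕ), lt a b →
      lt (a.1 + c₁, a.2 + c₂) (b.1 + c₁, b.2 + c₂))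
    (hsyn : IsSyndromeTable r₁ r₂ α₁ α₂ τ e U)
    {ff : Pair →₀ L} {ss : Pair}
    (hgen : GeneratesUpTo lt U ff ss l) (hne : evalArr U ff ss l ≠ 0)
    (u v : ℕ) (hw1 : u + ss.1 ≤ l.1) (hw2 : v + ss.2 ≤ l.2) :
    Dstar lt α₁ α₂ e.support (u, v) := by
  intro g hLP hvan
  have hwl : ((u + (l.1 - u), v + (l.2 - v)) : Pair) = l := by
    rw [show u + (l.1 - u) = l.1 by omega, show v + (l.2 - v) = l.2 by omega]
  have key : ∀ p ∈ g.support, p ≠ (u, v) →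
      g p * evalArr U ff ss (p.1 + (l.1 - u), p.2 + (l.2 - v)) = 0 := by
    intro p hp hpw
    rcases hLP.2 p hp with rfl | hplt
    · exact absurd rfl hpw
    · have h' := htransl p (u, v) (l.1 - u) (l.2 - v) hplt
      dsimp only at h'
      rw [hwl] at h'
      rw [hgen _ (preceq_mk (by omega) (by omega)) h', mul_zero]
  have hsum1 : (∑ p ∈ g.support, g p * evalArr U ff ss (p.1 + (l.1 - u), p.2 + (l.2 - v)))
      = g (u, v) * evalArr U ff ss l := by
    have h0 := Finset.sum_eq_single (s := g.support)
        (f := fun p => g p * evalArr U ff ss (p.1 + (l.1 - u), p.2 + (l.2 - v))) (u, v) key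
        (fun h => by
          show g (u, v) * _ = 0
          rw [Finsupp.notMem_support_iff.mp h, zero_mul])
    refine h0.trans ?_
    show g (u, v) * evalArr U ff ss (u + (l.1 - u), v + (l.2 - v)) = _
    rw [hwl]
  have hsum0 : (∑ p ∈ g.support, g p * evalArr U ff ss (p.1 + (l.1 - u), p.2 + (l.2 - v)))
      = 0 := by
    have hform : ∀ p ∈ g.support,
        g p * evalArr U ff ss (p.1 + (l.1 - u), p.2 + (l.2 - v))
        = ∑ m ∈ ff.support, ff m *
            (g p * U (p.1 + (m.1 + (l.1 - u - ss.1) + u) - u,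
              p.2 + (m.2 + (l.2 - v - ss.2) + v) - v)) := by
      intro p _
      simp only [evalArr]
      rw [if_pos (preceq_mk (by omega) (by omega) :
            Preceq ss (p.1 + (l.1 - u), p.2 + (l.2 - v)))]
      rw [Finset.mul_sum]
      refine Finset.sum_congr rfl fun m _ => ?_
      rw [show m.1 + (p.1 + (l.1 - u)) - ss.1
            = p.1 + (m.1 + (l.1 - u - ss.1) + u) - u by omega,
          show m.2 + (p.2 + (l.2 - v)) - ss.2
            = p.2 + (m.2 + (l.2 - v - ss.2) + v) - v by omega]
      ring
    calc (∑ p ∈ g.support, g p * evalArr U ff ss (p.1 + (l.1 - u), p.2 + (l.2 - v)))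
        = ∑ p ∈ g.support, ∑ m ∈ ff.support, ff m *
            (g p * U (p.1 + (m.1 + (l.1 - u - ss.1) + u) - u,
              p.2 + (m.2 + (l.2 - v - ss.2) + v) - v)) := Finset.sum_congr rfl hform
      _ = ∑ m ∈ ff.support, ∑ p ∈ g.support, ff m *
            (g p * U (p.1 + (m.1 + (l.1 - u - ss.1) + u) - u,
              p.2 + (m.2 + (l.2 - v - ss.2) + v) - v)) := Finset.sum_comm
      _ = 0 := Finset.sum_eq_zero fun m _ => by
            rw [← Finset.mul_sum,
              vanishes_gen hsyn hvan u v (m.1 + (l.1 - u - ss.1) + u)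
                (m.2 + (l.2 - v - ss.2) + v) (by omega) (by omega), mul_zero]
  have hz : g (u, v) * evalArr U ff ss l = 0 := hsum1.symm.trans hsum0
  rcases mul_eq_zero.mp hz with h | h
  · exact Finsupp.mem_support_iff.mp hLP.1 h
  · exact hne h

end Aux2

section Aux3

lemma fin_chain_mono {d : ℕ} (g : Fin d → ℕ) (hg : ∀ i j : Fin d, i < j → g i < g j) :
    ∀ (k : ℕ) (hk : k < d) (i : Fin d), (i : ℕ) ≤ k → g i + (k - (i : ℕ)) ≤ g ⟨k, hk⟩ := by
  intro k
  induction k with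
  | zero =>
    intro hk i hi
    have hieq : i = ⟨0, hk⟩ := Fin.ext (show i.val = 0 by omega)
    rw [hieq]
    have hv : ((⟨0, hk⟩ : Fin d) : ℕ) = 0 := rfl
    omega
  | succ k ih =>
    intro hk i hi
    rcases Nat.lt_or_ge (i : ℕ) (k + 1) with hlt | hge
    · have hk' : k < d := Nat.lt_of_succ_lt hk
      have h1 := ih hk' i (by omega)
      have h2 := hg ⟨k, hk'⟩ ⟨k + 1, hk⟩ (Fin.mk_lt_mk.mpr (Nat.lt_succ_self k))
      omega
    · have hieq : i = ⟨k + 1, hk⟩ := Fin.ext (show i.val = k + 1 by omega)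
      rw [hieq]
      have hv : ((⟨k + 1, hk⟩ : Fin d) : ℕ) = k + 1 := rfl
      omega

lemma fin_chain_anti {d : ℕ} (g : Fin d → ℕ) (hg : ∀ i j : Fin d, i < j → g j < g i) :
    ∀ (k : ℕ) (hk : k < d) (i : Fin d), (i : ℕ) ≤ k → g ⟨k, hk⟩ + (k - (i : ℕ)) ≤ g i := by
  intro k
  induction k with
  | zero =>
    intro hk i hi
    have hieq : i = ⟨0, hk⟩ := Fin.ext (show i.val = 0 by omega)
    rw [hieq]
    have hv : ((⟨0, hk⟩ : Fin d) : ℕ) = 0 := rfl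
    omega
  | succ k ih =>
    intro hk i hi
    rcases Nat.lt_or_ge (i : ℕ) (k + 1) with hlt | hge
    · have hk' : k < d := Nat.lt_of_succ_lt hk
      have h1 := ih hk' i (by omega)
      have h2 := hg ⟨k, hk'⟩ ⟨k + 1, hk⟩ (Fin.mk_lt_mk.mpr (Nat.lt_succ_self k))
      omega
    · have hieq : i = ⟨k + 1, hk⟩ := Fin.ext (show i.val = k + 1 by omega)
      rw [hieq]
      have hv : ((⟨k + 1, hk⟩ : Fin d) : ℕ) = k + 1 := rfl
      omega

lemma mem_deltaF {d : ℕ} {s : Fin d → Pair} {n : Pair} (i : ℕ) (hi : i + 1 < d)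
    (h1 : n.1 < (s ⟨i, Nat.lt_of_succ_lt hi⟩).1) (h2 : n.2 < (s ⟨i + 1, hi⟩).2) :
    n ∈ DeltaF d s :=
  ⟨⟨i, Nat.lt_of_succ_lt hi⟩, hi, h1, h2⟩

end Aux3
set_option maxHeartbeats 2000000 in
/-- if d ≥ 4 there is a linear recurring relation at l for f⁽¹⁾ or f⁽ᵈ⁾. -/
theorem statement3{q r₁ r₂ t : ℕ} {F L : Type*} [Field F] [Fintype F] [Field L]
    [Algebra F L] {α₁ α₂ : L} {τ : Pair} {e : Pair →₀ F} {U : Pair → L}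
    (hsetup : Setup q r₁ r₂ t α₁ α₂ τ e U)
{lt : Pair → Pair → Prop}
    (hord : (lt = LexLt ∧ LCond U t) ∨ (lt = GrLt ∧ GCond U t))
    {l : Pair} (hl : l ∈ Sset t)
    {d : ℕ} {f : Fin d → (Pair →₀ L)} {s : Fin d → Pair}
    (hmin : IsMinimalSet lt U l d f s)
    (hl1 : l.1 ≠ 0) (hl2 : l.2 ≠ 0) (hsum : l.1 + l.2 = t) (hd : 4 ≤ d) :
    ∃ i : Fin d, ((i : ℕ) = 0 ∨ (i : ℕ) = d - 1) ∧
      Preceq (s i) l ∧ evalArr U (f i) (s i) l = 0 := by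
  classical
  have hlt : lt = LexLt ∨ lt = GrLt := hord.imp And.left And.left
  have htot := lt_total_of hlt
  have htr := lt_trans_of hlt
  have htransl := lt_transl_of hlt
  by_contra hcon
  push_neg at hcon
  have hd0 : 0 < d := by omega
  have h1d : 1 < d := by omega
  have h2d : 2 < d := by omega
  have hdm1 : d - 1 < d := Nat.sub_lt hd0 Nat.one_pos
  have hdm2 : d - 2 < d := by omega
  have hl1' : 1 ≤ l.1 := Nat.pos_of_ne_zero hl1
  have hl2' : 1 ≤ l.2 := Nat.pos_of_ne_zero hl2
  have hs02 : (s ⟨0, hd0⟩).2 = 0 := hmin.first2 hd0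
  have hsd1 : (s ⟨d - 1, hdm1⟩).1 = 0 := hmin.last1 hd0
  have hmono := fin_chain_mono (fun i : Fin d => (s i).2) (fun i j h => hmin.mono2 i j h)
  have hanti := fin_chain_anti (fun i : Fin d => (s i).1) (fun i j h => hmin.anti1 i j h)
  have hb1 : (s ⟨0, hd0⟩).2 + (1 - 0) ≤ (s ⟨1, h1d⟩).2 := hmono 1 h1d ⟨0, hd0⟩ (Nat.zero_le _)
  have hb2 : (s ⟨0, hd0⟩).2 + (2 - 0) ≤ (s ⟨2, h2d⟩).2 := hmono 2 h2d ⟨0, hd0⟩ (Nat.zero_le _)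
  have hbd : (s ⟨0, hd0⟩).2 + (d - 1 - 0) ≤ (s ⟨d - 1, hdm1⟩).2 :=
    hmono (d - 1) hdm1 ⟨0, hd0⟩ (Nat.zero_le _)
  have ha0 : (s ⟨d - 1, hdm1⟩).1 + (d - 1 - 0) ≤ (s ⟨0, hd0⟩).1 :=
    hanti (d - 1) hdm1 ⟨0, hd0⟩ (Nat.zero_le _)
  have ha1 : (s ⟨d - 1, hdm1⟩).1 + (d - 1 - 1) ≤ (s ⟨1, h1d⟩).1 :=
    hanti (d - 1) hdm1 ⟨1, h1d⟩ (show 1 ≤ d - 1 by omega)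
  have had2 : (s ⟨d - 1, hdm1⟩).1 + (d - 1 - (d - 2)) ≤ (s ⟨d - 2, hdm2⟩).1 :=
    hanti (d - 1) hdm1 ⟨d - 2, hdm2⟩ (show d - 2 ≤ d - 1 by omega)
  have ha3 : 3 ≤ (s ⟨0, hd0⟩).1 := by omega
  have hb3 : 3 ≤ (s ⟨d - 1, hdm1⟩).2 := by omega
  have hs11 : 2 ≤ (s ⟨1, h1d⟩).1 := by omega
  have hs21 : 1 ≤ (s ⟨1, h1d⟩).2 := by omega
  have hs22 : 2 ≤ (s ⟨2, h2d⟩).2 := by omega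
  have hsd21 : 1 ≤ (s ⟨d - 2, hdm2⟩).1 := by omega
  have hdx : d - 2 + 1 < d := by omega
  have hfin : (⟨d - 2 + 1, hdx⟩ : Fin d) = ⟨d - 1, hdm1⟩ :=
    Fin.ext (show d - 2 + 1 = d - 1 by omega)
  -- DeltaF memberships
  have hmrow : ∀ u : ℕ, u < (s ⟨0, hd0⟩).1 → ((u, 0) : Pair) ∈ DeltaF d s :=
    fun u hu => mem_deltaF 0 h1d hu hs21
  have hmcol : ∀ u : ℕ, u < (s ⟨d - 1, hdm1⟩).2 → ((0, u) : Pair) ∈ DeltaF d s := by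
    intro u hu
    refine mem_deltaF (d - 2) hdx hsd21 ?_
    rw [hfin]
    exact hu
  have hm11 : ((1, 1) : Pair) ∈ DeltaF d s := mem_deltaF 1 h2d hs11 hs22
  -- Dstar providers
  have hrow : ∀ u : ℕ, u < (s ⟨0, hd0⟩).1 → Dstar lt α₁ α₂ e.support (u, 0) :=
    fun u hu => dstar_of_deltaF hsetup.syndrome hmin (hmrow u hu)
  have hcolD : ∀ u : ℕ, u < (s ⟨d - 1, hdm1⟩).2 → Dstar lt α₁ α₂ e.support (0, u) :=
    fun u hu => dstar_of_deltaF hsetup.syndrome hmin (hmcol u hu)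
  have h11D : Dstar lt α₁ α₂ e.support (1, 1) := dstar_of_deltaF hsetup.syndrome hmin hm11
  have hRA : (s ⟨0, hd0⟩).1 ≤ l.1 → ∀ u v : ℕ, u + (s ⟨0, hd0⟩).1 ≤ l.1 → v ≤ l.2 →
      Dstar lt α₁ α₂ e.support (u, v) := by
    intro hp u v h1 h2
    exact dstar_of_disc htransl hsetup.syndrome (hmin.gen ⟨0, hd0⟩)
      (hcon ⟨0, hd0⟩ (Or.inl rfl) ⟨hp, by omega⟩) u v h1 (by omega)
  have hRB : (s ⟨d - 1, hdm1⟩).2 ≤ l.2 → ∀ u v : ℕ, u ≤ l.1 → v + (s ⟨d - 1, hdm1⟩).2 ≤ l.2 →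
      Dstar lt α₁ α₂ e.support (u, v) := by
    intro hp u v h1 h2
    exact dstar_of_disc htransl hsetup.syndrome (hmin.gen ⟨d - 1, hdm1⟩)
      (hcon ⟨d - 1, hdm1⟩ (Or.inr rfl) ⟨by omega, hp⟩) u v (by omega) h2
  have hE : e.support.card ≤ t := hsetup.weight_le
  rcases le_or_gt ((s ⟨0, hd0⟩).1) l.1 with hA | hA <;>
    rcases le_or_gt ((s ⟨d - 1, hdm1⟩).2) l.2 with hB | hB
  · -- both rectangles available
    refine contra_count (α₁ := α₁) (α₂ := α₂) htot htr t hE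
      (l.1 + l.2 + (l.2 - (s ⟨d - 1, hdm1⟩).2) + (l.1 - (s ⟨0, hd0⟩).1) + 1) (by omega)
      (fun k => if k ≤ l.1 then ((k, 0) : Pair) else if k ≤ l.1 + l.2 then (0, k - l.1)
        else if k ≤ l.1 + l.2 + (l.2 - (s ⟨d - 1, hdm1⟩).2) then (l.1, k - (l.1 + l.2))
        else (k - (l.1 + l.2 + (l.2 - (s ⟨d - 1, hdm1⟩).2)), l.2)) ?_ ?_
    · intro k hk k' hk' heq
      beta_reduce at heq
      split_ifs at heq <;> rw [Prod.mk.injEq] at heq <;> omega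
    · intro k hk
      beta_reduce
      split_ifs with h1 h2 h3
      · exact hRB hB k 0 (by omega) (by omega)
      · exact hRA hA 0 (k - l.1) (by omega) (by omega)
      · exact hRB hB l.1 (k - (l.1 + l.2)) (by omega) (by omega)
      · exact hRA hA (k - (l.1 + l.2 + (l.2 - (s ⟨d - 1, hdm1⟩).2))) l.2 (by omega) (by omega)
  · -- RectA available, b > l.2
    refine contra_count (α₁ := α₁) (α₂ := α₂) htot htr t hE (l.1 + l.2 + 1) (by omega)
      (fun k => if k < l.1 - (s ⟨0, hd0⟩).1 then ((k + 1, l.2) : Pair)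
        else if k < l.1 then (k - (l.1 - (s ⟨0, hd0⟩).1), 0)
        else if k < l.1 + l.2 then (0, k - l.1 + 1)
        else if 2 ≤ l.2 ∨ l.1 - (s ⟨0, hd0⟩).1 = 0 then (1, 1) else (0, 2)) ?_ ?_
    · intro k hk k' hk' heq
      beta_reduce at heq
      split_ifs at heq <;> rw [Prod.mk.injEq] at heq <;> omega
    · intro k hk
      beta_reduce
      split_ifs with h1 h2 h3 h4
      · exact hRA hA (k + 1) l.2 (by omega) (by omega)
      · exact hrow (k - (l.1 - (s ⟨0, hd0⟩).1)) (by omega)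
      · exact hcolD (k - l.1 + 1) (by omega)
      · exact h11D
      · exact hcolD 2 (by omega)
  · -- RectB available, a > l.1
    refine contra_count (α₁ := α₁) (α₂ := α₂) htot htr t hE (l.1 + l.2 + 1) (by omega)
      (fun k => if k < l.2 - (s ⟨d - 1, hdm1⟩).2 then ((l.1, k + 1) : Pair)
        else if k < l.2 then (0, k - (l.2 - (s ⟨d - 1, hdm1⟩).2))
        else if k < l.2 + l.1 then (k - l.2 + 1, 0)
        else if 2 ≤ l.1 ∨ l.2 - (s ⟨d - 1, hdm1⟩).2 = 0 then (1, 1) else (2, 0)) ?_ ?_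
    · intro k hk k' hk' heq
      beta_reduce at heq
      split_ifs at heq <;> rw [Prod.mk.injEq] at heq <;> omega
    · intro k hk
      beta_reduce
      split_ifs with h1 h2 h3 h4
      · exact hRB hB l.1 (k + 1) (by omega) (by omega)
      · exact hcolD (k - (l.2 - (s ⟨d - 1, hdm1⟩).2)) (by omega)
      · exact hrow (k - l.2 + 1) (by omega)
      · exact h11D
      · exact hrow 2 (by omega)
  · -- neither rectangle: row + column + (1,1)
    refine contra_count (α₁ := α₁) (α₂ := α₂) htot htr t hE (l.1 + l.2 + 2) (by omega)
      (fun k => if k ≤ l.1 then ((k, 0) : Pair)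
        else if k ≤ l.1 + l.2 then (0, k - l.1) else (1, 1)) ?_ ?_
    · intro k hk k' hk' heq
      beta_reduce at heq
      split_ifs at heq <;> rw [Prod.mk.injEq] at heq <;> omega
    · intro k hk
      beta_reduce
      split_ifs with h1 h2
      · exact hrow k (by omega)
      · exact hcolD (k - l.1) (by omega)
      · exact h11D

end BMS
end

section
/- Under the General Assumption, suppose l₁ + l₂ = t and l₁ > 1 and l₂ > 1. If l₁ < s₁^(1) and l₂ > s₂^(d), then f^(d)[U]_l = 0. -/
open scoped BigOperators

namespace BMS

/-!
Suppose `f⁽ᵈ⁾[U]_l ≠ 0`, where `LP f⁽ᵈ⁾ = (0, s₂)`, and call `n` dead if no polynomial with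
leading exponent `n` generates `u` up to and including `l`. Expanding `∑ᵢ ∑ⱼ fᵢ gⱼ u_{i+j+β}` in
both orders (Sakata) shows that every `n` with `(0, s₂) + n ⪯ l` is dead, so the rectangle
`[0, l₁] × [0, c]`, `c = l₂ - s₂ ≥ 1`, is dead; by minimality so is the column `{0} × [0, s₂)`
of the footprint `Δ(F_l)`. On the other hand `u_n = ∑ₘ wₘ xₘ^{n₁} yₘ^{n₂}` is a sum of `ω(e)`
exponentials, and a polynomial vanishing at all points `(xₘ, yₘ)` generates the whole table.
Hence the values of the monomials `X^n` at these points, for dead `n`, form a family that is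
triangular for `≤_T`, so linearly independent, and there are at most `ω(e) ≤ t = l₁ + l₂` dead
points. But the rectangle and the column hold at least `l₁ (c + 1) + s₂ > l₁ + l₂` points.
-/

instance : IsStrictTotalOrder Pair LexLt where
  trichotomous a b := by simp only [LexLt, Prod.ext_iff]; omega
  irrefl a := by simp only [LexLt]; omega
  trans a b c := by simp only [LexLt]; omega

instance : IsStrictTotalOrder Pair GrLt where
  trichotomous a b := by simp only [GrLt, Prod.ext_iff]; omega
  irrefl a := by simp only [GrLt]; omega
  trans a b c := by simp only [GrLt]; omega

theorem lexLt_add_right {a b : Pair} (c : Pair) (h : LexLt a b) : LexLt (a + c) (b + c) := by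
  simp only [LexLt, Prod.fst_add, Prod.snd_add] at *; omega

theorem grLt_add_right {a b : Pair} (c : Pair) (h : GrLt a b) : GrLt (a + c) (b + c) := by
  simp only [GrLt, Prod.fst_add, Prod.snd_add] at *; omega

theorem preceq_iff_exists_add {s k : Pair} : Preceq s k ↔ ∃ x, k = s + x := by
  constructor
  · rintro ⟨h₁, h₂⟩
    exact ⟨(k.1 - s.1, k.2 - s.2), Prod.ext (by simp; omega) (by simp; omega)⟩
  · rintro ⟨x, rfl⟩
    exact ⟨Nat.le_add_right _ _, Nat.le_add_right _ _⟩

section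
variable {L : Type*} [Field L]

theorem evalArr_add (U : Pair → L) (f : Pair →₀ L) (s x : Pair) :
    evalArr U f s (s + x) = ∑ i ∈ f.support, f i * U (i + x) := by
  rw [evalArr, if_pos (preceq_iff_exists_add.2 ⟨x, rfl⟩)]
  refine Finset.sum_congr rfl fun i _ => ?_
  congr 2
  ext <;> simp <;> omega

variable {lt : Pair → Pair → Prop} {U : Pair → L}

def GeneratesThrough (lt : Pair → Pair → Prop) (U : Pair → L) (f : Pair →₀ L)
    (s l : Pair) : Prop :=
  ∀ k : Pair, Preceq s k → lt k l ∨ k = l → evalArr U f s k = 0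

-- `Δ(u^{l⁺})`: the footprint of the subarray that also contains the entry `u_l`.
def footprintThrough (lt : Pair → Pair → Prop) (U : Pair → L) (l : Pair) : Set Pair :=
  {n | ∀ g : Pair →₀ L, IsLP lt g n → ¬ GeneratesThrough lt U g n l}

theorem deltaF_subset_footprintThrough {l : Pair} {d : ℕ} {f : Fin d → (Pair →₀ L)}
    {s : Fin d → Pair} (hmin : IsMinimalSet lt U l d f s) :
    DeltaF d s ⊆ footprintThrough lt U l :=
  fun n hn g hg hgen => hmin.minimal g n hg hn fun k hk hkl => hgen k hk (Or.inl hkl)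

theorem mem_footprintThrough_of_add_preceq
    (hadd : ∀ {a b : Pair} (c : Pair), lt a b → lt (a + c) (b + c))
    {f : Pair →₀ L} {s l n : Pair} (hf : IsLP lt f s) (hfgen : GeneratesUpTo lt U f s l)
    (hfl : evalArr U f s l ≠ 0) (hnl : Preceq (s + n) l) : n ∈ footprintThrough lt U l := by
  intro g hg hggen
  obtain ⟨β, rfl⟩ := preceq_iff_exists_add.1 hnl
  have hcross : ∑ j ∈ g.support, g j * evalArr U f s (s + (j + β)) =
      ∑ i ∈ f.support, f i * evalArr U g n (n + (i + β)) := by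
    simp only [evalArr_add, Finset.mul_sum]
    rw [Finset.sum_comm]
    refine Finset.sum_congr rfl fun i _ => Finset.sum_congr rfl fun j _ => ?_
    rw [add_left_comm j i β]
    ring
  have hleft : ∑ j ∈ g.support, g j * evalArr U f s (s + (j + β)) =
      g n * evalArr U f s (s + n + β) := by
    rw [Finset.sum_eq_single_of_mem n hg.1, add_assoc]
    intro j hj hjn
    have hjlt : lt (s + (j + β)) (s + n + β) := by
      simpa only [add_comm, add_left_comm] using hadd (s + β) ((hg.2 j hj).resolve_left hjn)
    rw [hfgen _ (preceq_iff_exists_add.2 ⟨_, rfl⟩) hjlt, mul_zero]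
  have hright : ∑ i ∈ f.support, f i * evalArr U g n (n + (i + β)) = 0 := by
    refine Finset.sum_eq_zero fun i hi => ?_
    have hle : lt (n + (i + β)) (s + n + β) ∨ n + (i + β) = s + n + β := by
      rcases hf.2 i hi with rfl | hlt
      · exact Or.inr (by abel)
      · exact Or.inl (by simpa only [add_comm, add_left_comm] using hadd (n + β) hlt)
    rw [hggen _ (preceq_iff_exists_add.2 ⟨_, rfl⟩) hle, mul_zero]
  rw [hleft, hright] at hcross
  exact mul_ne_zero (Finsupp.mem_support_iff.1 hg.1) hfl hcross

end

theorem linearIndepOn_of_notMem_span_Iio {ι K V : Type*} [LinearOrder ι] [Field K]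
    [AddCommGroup V] [Module K V] {v : ι → V} (D : Finset ι)
    (h : ∀ i ∈ D, v i ∉ Submodule.span K (v '' Set.Iio i)) : LinearIndepOn K v (D : Set ι) := by
  classical
  induction D using Finset.induction_on_max with
  | empty => simp
  | insert a D hlt ih =>
    rw [Finset.coe_insert]
    refine (ih fun i hi => h i (Finset.mem_insert_of_mem hi)).insert fun hspan => ?_
    exact h a (Finset.mem_insert_self a D)
      (Submodule.span_mono (Set.image_mono fun i hi => hlt i hi) hspan)

def monomialEval {L ι : Type*} [Field L] (x y : ι → L) (i : Pair) : ι → L :=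
  fun m => x m ^ i.1 * y m ^ i.2

section
variable {L : Type*} [Field L] {lt : Pair → Pair → Prop} {U : Pair → L}
variable {ι : Type*} [Fintype ι] {w x y : ι → L}

theorem evalArr_eq_zero_of_linearCombination_eq_zero
    (hU : ∀ n, U n = ∑ m, w m * x m ^ n.1 * y m ^ n.2) {g : Pair →₀ L}
    (hg : Finsupp.linearCombination L (monomialEval x y) g = 0) (s k : Pair) :
    evalArr U g s k = 0 := by
  by_cases hsk : Preceq s k
  · obtain ⟨a, rfl⟩ := preceq_iff_exists_add.1 hsk
    have hvanish (m : ι) : ∑ i ∈ g.support, g i * (x m ^ i.1 * y m ^ i.2) = 0 := by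
      simpa [Finsupp.linearCombination_apply, Finsupp.sum, monomialEval] using congrFun hg m
    calc evalArr U g s (s + a)
        = ∑ m, w m * x m ^ a.1 * y m ^ a.2 *
            ∑ i ∈ g.support, g i * (x m ^ i.1 * y m ^ i.2) := by
          simp only [evalArr_add, hU, Finset.mul_sum]
          rw [Finset.sum_comm]
          refine Finset.sum_congr rfl fun m _ => Finset.sum_congr rfl fun i _ => ?_
          simp only [Prod.fst_add, Prod.snd_add, pow_add]
          ring
      _ = 0 := by simp [hvanish]
  · simp [evalArr, hsk]

theorem monomialEval_notMem_span_of_mem_footprintThrough [Std.Irrefl lt]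
    (hU : ∀ n, U n = ∑ m, w m * x m ^ n.1 * y m ^ n.2) {l n : Pair}
    (hn : n ∈ footprintThrough lt U l) :
    monomialEval x y n ∉ Submodule.span L (monomialEval x y '' {m | lt m n}) := by
  classical
  intro hspan
  obtain ⟨c, hc, hcn⟩ := (Finsupp.mem_span_image_iff_linearCombination L).1 hspan
  have hcn0 : c n = 0 := Finsupp.notMem_support_iff.1 fun h => Std.Irrefl.irrefl n (hc h)
  set g := Finsupp.single n 1 - c
  have hg : IsLP lt g n := by
    refine ⟨by simp [g, hcn0], fun m hm => ?_⟩
    by_cases hmn : m = n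
    · exact Or.inl hmn
    · refine Or.inr (hc (Finsupp.mem_support_iff.2 fun hcm => ?_))
      simp [g, Ne.symm hmn, hcm] at hm
  have hg0 : Finsupp.linearCombination L (monomialEval x y) g = 0 := by
    simp [g, map_sub, hcn]
  exact hn g hg fun k _ _ => evalArr_eq_zero_of_linearCombination_eq_zero hU hg0 n k

theorem card_le_of_subset_footprintThrough [IsStrictTotalOrder Pair lt]
    (hU : ∀ n, U n = ∑ m, w m * x m ^ n.1 * y m ^ n.2) {l : Pair} {D : Finset Pair}
    (hD : (D : Set Pair) ⊆ footprintThrough lt U l) : D.card ≤ Fintype.card ι := by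
  classical
  let _ : LinearOrder Pair := linearOrderOfSTO lt
  have hli : LinearIndepOn L (monomialEval x y) (D : Set Pair) :=
    linearIndepOn_of_notMem_span_Iio D fun n hn =>
      monomialEval_notMem_span_of_mem_footprintThrough hU (hD hn)
  simpa [Module.finrank_fintype_fun_eq_card] using hli.fintype_card_le_finrank

end

theorem IsSyndromeTable.exists_eq_sum_pow {F L : Type*} [Field F] [Field L] [Algebra F L]
    {r₁ r₂ : ℕ} {α₁ α₂ : L} {τ : Pair} {e : Pair →₀ F} {U : Pair → L}
    (hU : IsSyndromeTable r₁ r₂ α₁ α₂ τ e U) :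
    ∃ w x y : e.support → L, ∀ n, U n = ∑ m, w m * x m ^ n.1 * y m ^ n.2 := by
  refine ⟨fun m => algebraMap F L (e m) * α₁ ^ (τ.1 * m.1.1) * α₂ ^ (τ.2 * m.1.2),
    fun m => α₁ ^ m.1.1, fun m => α₂ ^ m.1.2, fun n => ?_⟩
  rw [hU.2.2.2, polyEval, ← Finset.sum_coe_sort]
  refine Finset.sum_congr rfl fun m _ => ?_
  ring

theorem mk_zero_mem_deltaF {L : Type*} [Field L] {lt : Pair → Pair → Prop} {U : Pair → L}
    {l : Pair} {d : ℕ} {f : Fin d → (Pair →₀ L)} {s : Fin d → Pair}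
    (hmin : IsMinimalSet lt U l d f s) (hd : 2 ≤ d) {j : ℕ}
    (hj : j < (s ⟨d - 1, by omega⟩).2) : ((0 : ℕ), j) ∈ DeltaF d s := by
  have hlast : (⟨d - 2 + 1, by omega⟩ : Fin d) = ⟨d - 1, by omega⟩ := Fin.ext (by simp; omega)
  refine ⟨⟨d - 2, by omega⟩, by simp; omega, ?_, by simpa [hlast] using hj⟩
  have hpos := hmin.anti1 ⟨d - 2, by omega⟩ ⟨d - 1, by omega⟩ (by simp; omega)
  rw [hmin.last1 (by omega)] at hpos
  exact hpos

def rectUnionColumn (a c b : ℕ) : Finset Pair :=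
  Finset.range (a + 1) ×ˢ Finset.range (c + 1) ∪ {0} ×ˢ Finset.Ico (c + 1) b

theorem card_rectUnionColumn (a c b : ℕ) :
    (rectUnionColumn a c b).card = (a + 1) * (c + 1) + (b - (c + 1)) := by
  have hdisj : Disjoint (Finset.range (a + 1) ×ˢ Finset.range (c + 1))
      ({0} ×ˢ Finset.Ico (c + 1) b) := by
    simp only [Finset.disjoint_left, Finset.mem_product, Finset.mem_range, Finset.mem_Ico]
    omega
  rw [rectUnionColumn, Finset.card_union_of_disjoint hdisj]
  simp

theorem rectUnionColumn_subset_footprintThrough {L : Type*} [Field L]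
    {lt : Pair → Pair → Prop} {U : Pair → L}
    (hadd : ∀ {a b : Pair} (c : Pair), lt a b → lt (a + c) (b + c))
    {l : Pair} {d : ℕ} {f : Fin d → (Pair →₀ L)} {s : Fin d → Pair}
    (hmin : IsMinimalSet lt U l d f s) (hd : 2 ≤ d)
    (hne : evalArr U (f ⟨d - 1, by omega⟩) (s ⟨d - 1, by omega⟩) l ≠ 0)
    (hb : (s ⟨d - 1, by omega⟩).2 ≤ l.2) :
    (rectUnionColumn l.1 (l.2 - (s ⟨d - 1, by omega⟩).2) (s ⟨d - 1, by omega⟩).2 : Set Pair) ⊆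
      footprintThrough lt U l := by
  have hlast1 := hmin.last1 (by omega)
  rintro ⟨i, j⟩ hn
  simp only [rectUnionColumn, Finset.coe_union, Finset.coe_product, Set.mem_union,
    Set.mem_prod, Finset.mem_coe, Finset.mem_range, Finset.mem_singleton, Finset.mem_Ico] at hn
  rcases hn with ⟨hi, hj⟩ | ⟨rfl, -, hj⟩
  · exact mem_footprintThrough_of_add_preceq hadd (hmin.isLP _) (hmin.gen _) hne
      ⟨by simp; omega, by simp; omega⟩
  · exact deltaF_subset_footprintThrough hmin (mk_zero_mem_deltaF hmin hd hj)

theorem statement6_general{q r₁ r₂ t : ℕ} {F L : Type*} [Field F] [Fintype F] [Field L]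
    [Algebra F L] {α₁ α₂ : L} {τ : Pair} {e : Pair →₀ F} {U : Pair → L}
    (hsetup : Setup q r₁ r₂ t α₁ α₂ τ e U)
{lt : Pair → Pair → Prop}
    (hord : (lt = LexLt ∧ LCond U t) ∨ (lt = GrLt ∧ GCond U t))
    {l : Pair}
    {d : ℕ} {f : Fin d → (Pair →₀ L)} {s : Fin d → Pair}
    (hmin : IsMinimalSet lt U l d f s)
    (hsum : l.1 + l.2 = t) (hl1 : 1 < l.1) (hd0 : 0 < d)
    (ha : l.1 < (s ⟨0, hd0⟩).1)
    (hb : (s ⟨d - 1, Nat.sub_lt hd0 Nat.one_pos⟩).2 < l.2) :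
    evalArr U (f ⟨d - 1, Nat.sub_lt hd0 Nat.one_pos⟩)
      (s ⟨d - 1, Nat.sub_lt hd0 Nat.one_pos⟩) l = 0 := by
  by_contra hne
  obtain ⟨_, hadd⟩ : IsStrictTotalOrder Pair lt ∧
      ∀ {a b : Pair} (c : Pair), lt a b → lt (a + c) (b + c) := by
    rcases hord with ⟨rfl, -⟩ | ⟨rfl, -⟩
    exacts [⟨inferInstance, lexLt_add_right⟩, ⟨inferInstance, grLt_add_right⟩]
  have hd : 2 ≤ d := by
    by_contra! hd
    have hfirst : (⟨0, hd0⟩ : Fin d) = ⟨d - 1, Nat.sub_lt hd0 Nat.one_pos⟩ :=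
      Fin.ext (by simp; omega)
    have := hmin.last1 hd0
    rw [hfirst] at ha
    omega
  obtain ⟨w, x, y, hU⟩ := hsetup.syndrome.exists_eq_sum_pow
  have hcard := card_le_of_subset_footprintThrough hU
    (rectUnionColumn_subset_footprintThrough hadd hmin hd hne hb.le)
  rw [card_rectUnionColumn, Fintype.card_coe] at hcard
  set c := l.2 - (s ⟨d - 1, Nat.sub_lt hd0 Nat.one_pos⟩).2
  have hexpand : (l.1 + 1) * (c + 1) = l.1 * c + l.1 + c + 1 := by ring
  have hc : 2 * c ≤ l.1 * c := Nat.mul_le_mul_right c hl1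
  have := hsetup.weight_le
  omega

/-- if l₁ < s₁⁽¹⁾ and l₂ > s₂⁽ᵈ⁾ then f⁽ᵈ⁾[U]_l = 0. -/
theorem statement6{q r₁ r₂ t : ℕ} {F L : Type*} [Field F] [Fintype F] [Field L]
    [Algebra F L] {α₁ α₂ : L} {τ : Pair} {e : Pair →₀ F} {U : Pair → L}
    (hsetup : Setup q r₁ r₂ t α₁ α₂ τ e U)
{lt : Pair → Pair → Prop}
    (hord : (lt = LexLt ∧ LCond U t) ∨ (lt = GrLt ∧ GCond U t))
    {l : Pair} (hl : l ∈ Sset t)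
    {d : ℕ} {f : Fin d → (Pair →₀ L)} {s : Fin d → Pair}
    (hmin : IsMinimalSet lt U l d f s)
    (hsum : l.1 + l.2 = t) (hl1 : 1 < l.1) (hl2 : 1 < l.2) (hd0 : 0 < d)
    (ha : l.1 < (s ⟨0, hd0⟩).1)
    (hb : (s ⟨d - 1, Nat.sub_lt hd0 Nat.one_pos⟩).2 < l.2) :
    evalArr U (f ⟨d - 1, Nat.sub_lt hd0 Nat.one_pos⟩)
      (s ⟨d - 1, Nat.sub_lt hd0 Nat.one_pos⟩) l = 0 :=
  statement6_general hsetup hord hmin hsum hl1 hd0 ha hb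

end BMS
end

section
/- Under the General Assumption, if l₁ = 0 and t + s₂^(d) ≤ l₂, then f^(d)[U]_l = 0. -/
open scoped BigOperators

namespace BMS

/-- A sequence of the form `j ↦ ∑_{k∈K} γ k * (β k)^j` with `|K| ≤ t` that vanishes
for all `j < t` vanishes everywhere. -/
lemma vanish_of_vanish_lt {L : Type*} [Field L] {ι : Type*}
    (K : Finset ι) (β γ : ι → L) (t : ℕ) (hcard : K.card ≤ t)
    (h0 : ∀ j < t, ∑ k ∈ K, γ k * β k ^ j = 0) :
    ∀ j, ∑ k ∈ K, γ k * β k ^ j = 0 := by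
  rcases Nat.eq_zero_or_pos K.card with hK | hK
  · intro j
    rw [Finset.card_eq_zero.mp hK]
    simp
  set P : Polynomial L := ∏ k ∈ K, (Polynomial.X - Polynomial.C (β k)) with hP
  have hmonic : P.Monic :=
    Polynomial.monic_prod_of_monic _ _ fun k _ => Polynomial.monic_X_sub_C _
  have hdeg : P.natDegree = K.card := by
    rw [hP, Polynomial.natDegree_prod _ _ fun k _ => Polynomial.X_sub_C_ne_zero (β k)]
    simp
  have hroot : ∀ k ∈ K, P.eval (β k) = 0 := by
    intro k hk
    rw [hP, Polynomial.eval_prod]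
    exact Finset.prod_eq_zero hk (by simp)
  have hrec : ∀ j, ∑ i ∈ Finset.range (P.natDegree + 1),
      P.coeff i * ∑ k ∈ K, γ k * β k ^ (j + i) = 0 := by
    intro j
    have hterm : ∀ k ∈ K, ∑ i ∈ Finset.range (P.natDegree + 1),
        P.coeff i * (γ k * β k ^ (j + i)) = 0 := by
      intro k hk
      have h1 : ∑ i ∈ Finset.range (P.natDegree + 1), P.coeff i * (γ k * β k ^ (j + i))
          = γ k * β k ^ j * P.eval (β k) := by
        rw [Polynomial.eval_eq_sum_range, Finset.mul_sum]
        apply Finset.sum_congr rfl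
        intro m _
        rw [pow_add]
        ring
      rw [h1, hroot k hk, mul_zero]
    calc ∑ i ∈ Finset.range (P.natDegree + 1), P.coeff i * ∑ k ∈ K, γ k * β k ^ (j + i)
        = ∑ i ∈ Finset.range (P.natDegree + 1), ∑ k ∈ K,
            P.coeff i * (γ k * β k ^ (j + i)) := by
          simp [Finset.mul_sum]
      _ = ∑ k ∈ K, ∑ i ∈ Finset.range (P.natDegree + 1),
            P.coeff i * (γ k * β k ^ (j + i)) := Finset.sum_comm
      _ = 0 := Finset.sum_eq_zero hterm
  intro j
  induction j using Nat.strong_induction_on with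
  | _ j ih =>
    by_cases hj : j < t
    · exact h0 j hj
    push_neg at hj
    have hDle : P.natDegree ≤ j := hdeg ▸ hcard.trans hj
    have h1 := hrec (j - P.natDegree)
    rw [Finset.sum_range_succ, hmonic.coeff_natDegree, one_mul,
      Nat.sub_add_cancel hDle] at h1
    have h2 : ∑ i ∈ Finset.range P.natDegree,
        P.coeff i * ∑ k ∈ K, γ k * β k ^ (j - P.natDegree + i) = 0 :=
      Finset.sum_eq_zero fun i hi => by
        rw [ih _ (by have := Finset.mem_range.mp hi; omega), mul_zero]
    rw [h2, zero_add] at h1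
    exact h1

/-- if l₁ = 0 and t + s₂⁽ᵈ⁾ ≤ l₂ then f⁽ᵈ⁾[U]_l = 0. -/
theorem statement11{q r₁ r₂ t : ℕ} {F L : Type*} [Field F] [Fintype F] [Field L]
    [Algebra F L] {α₁ α₂ : L} {τ : Pair} {e : Pair →₀ F} {U : Pair → L}
    (hsetup : Setup q r₁ r₂ t α₁ α₂ τ e U)
{lt : Pair → Pair → Prop}
    (hord : (lt = LexLt ∧ LCond U t) ∨ (lt = GrLt ∧ GCond U t))
    {l : Pair} (hl : l ∈ Sset t)
    {d : ℕ} {f : Fin d → (Pair →₀ L)} {s : Fin d → Pair}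
    (hmin : IsMinimalSet lt U l d f s)
    (hd0 : 0 < d) (hl1 : l.1 = 0)
    (hb : t + (s ⟨d - 1, Nat.sub_lt hd0 Nat.one_pos⟩).2 ≤ l.2) :
    evalArr U (f ⟨d - 1, Nat.sub_lt hd0 Nat.one_pos⟩)
      (s ⟨d - 1, Nat.sub_lt hd0 Nat.one_pos⟩) l = 0 := by
  obtain ⟨hesupp, hτ1, hτ2, hU⟩ := hsetup.syndrome
  set i : Fin d := ⟨d - 1, Nat.sub_lt hd0 Nat.one_pos⟩ with hi
  have hσ1 : (s i).1 = 0 := hmin.last1 hd0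
  set γ : Pair → L := fun k => ∑ m ∈ (f i).support,
    (f i) m * (algebraMap F L (e k) * α₁ ^ ((τ.1 + m.1) * k.1)
      * α₂ ^ ((τ.2 + m.2) * k.2)) with hγ
  set β : Pair → L := fun k => α₂ ^ k.2 with hβ
  have key : ∀ j, (s i).2 ≤ j →
      evalArr U (f i) (s i) (0, j) = ∑ k ∈ e.support, γ k * β k ^ (j - (s i).2) := by
    intro j hj
    have hpre : Preceq (s i) (0, j) := ⟨le_of_eq hσ1, hj⟩
    rw [evalArr, if_pos hpre]
    have hterm : ∀ m ∈ (f i).support,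
        (f i) m * U (m.1 + (0, j).1 - (s i).1, m.2 + (0, j).2 - (s i).2)
          = ∑ k ∈ e.support, (f i) m * (algebraMap F L (e k) * α₁ ^ ((τ.1 + m.1) * k.1)
              * α₂ ^ ((τ.2 + m.2) * k.2)) * β k ^ (j - (s i).2) := by
      intro m hm
      rw [hU, polyEval, Finset.mul_sum]
      apply Finset.sum_congr rfl
      intro k hk
      have e1 : τ.1 + (m.1 + (0, j).1 - (s i).1, m.2 + (0, j).2 - (s i).2).1
          = τ.1 + m.1 := by
        simp only [Prod.fst]
        omega
      have e2 : τ.2 + (m.1 + (0, j).1 - (s i).1, m.2 + (0, j).2 - (s i).2).2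
          = (τ.2 + m.2) + (j - (s i).2) := by
        simp only [Prod.snd]
        omega
      rw [e1, e2, hβ, pow_add]
      ring
    rw [Finset.sum_congr rfl hterm, Finset.sum_comm]
    apply Finset.sum_congr rfl
    intro k _
    rw [hγ]
    rw [Finset.sum_mul]
  have h0 : ∀ j' < t, ∑ k ∈ e.support, γ k * β k ^ j' = 0 := by
    intro j' hj'
    have hl2 : (s i).2 + j' < l.2 := by omega
    have hlt : lt (0, (s i).2 + j') l := by
      rcases hord with ⟨h, _⟩ | ⟨h, _⟩
      · rw [h]
        exact Or.inr ⟨hl1.symm, hl2⟩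
      · rw [h]
        refine Or.inl ?_
        simp only [Prod.fst, Prod.snd]
        omega
    have hg := hmin.gen i (0, (s i).2 + j') ⟨le_of_eq hσ1, Nat.le_add_right _ _⟩ hlt
    have hk := (key ((s i).2 + j') (Nat.le_add_right _ _)).symm.trans hg
    simpa using hk
  have hall := vanish_of_vanish_lt e.support β γ t hsetup.weight_le h0 (l.2 - (s i).2)
  have hl' : l = (0, l.2) := by
    obtain ⟨l1, l2⟩ := l
    simp_all
  rw [hl', key l.2 (by omega)]
  exact hall


end BMS
end

section
/- Under the General Assumption, if l₂ = 0 and t + s₁^(1) ≤ l₁, then f^(1)[U]_l = 0. -/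
open scoped BigOperators

namespace BMS

/-- Vandermonde-type key lemma: a sum of geometric sequences with distinct ratios
that vanishes at the first `B.card` indices vanishes everywhere. -/
lemma vand_key {L : Type*} [Field L] (B : Finset L) (δ : L → L)
    (h : ∀ j < B.card, ∑ b ∈ B, δ b * b ^ j = 0) (j : ℕ) :
    ∑ b ∈ B, δ b * b ^ j = 0 := by
  classical
  have hz : ∀ b ∈ B, δ b = 0 := by
    intro b₀ hb₀
    have hinj : Set.InjOn (id : L → L) B := fun x _ y _ h => h
    have hcard : 0 < B.card := Finset.card_pos.2 ⟨b₀, hb₀⟩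
    set Q := Lagrange.basis B id b₀ with hQ
    have hdeg : Q.natDegree < B.card := by
      rw [hQ, Lagrange.natDegree_basis hinj hb₀]; omega
    have h1 : ∑ b ∈ B, δ b * Q.eval b = δ b₀ := by
      rw [Finset.sum_eq_single b₀]
      · rw [show Q.eval b₀ = Q.eval (id b₀) from rfl,
          Lagrange.eval_basis_self hinj hb₀, mul_one]
      · intro b hb hne
        rw [show Q.eval b = Q.eval (id b) from rfl,
          Lagrange.eval_basis_of_ne (Ne.symm hne) hb, mul_zero]
      · intro hb; exact absurd hb₀ hb
    have h2 : ∑ b ∈ B, δ b * Q.eval b = 0 := by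
      have key : ∀ b ∈ B, δ b * Q.eval b =
          ∑ i ∈ Finset.range B.card, Q.coeff i * (δ b * b ^ i) := by
        intro b _
        rw [Polynomial.eval_eq_sum_range' hdeg, Finset.mul_sum]
        exact Finset.sum_congr rfl fun i _ => by ring
      rw [Finset.sum_congr rfl key, Finset.sum_comm]
      refine Finset.sum_eq_zero fun i hi => ?_
      rw [← Finset.mul_sum, h i (Finset.mem_range.1 hi), mul_zero]
    exact h1.symm.trans h2
  exact Finset.sum_eq_zero fun b hb => by rw [hz b hb, zero_mul]

/-- if l₂ = 0 and t + s₁⁽¹⁾ ≤ l₁ then f⁽¹⁾[U]_l = 0. -/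
theorem statement12{q r₁ r₂ t : ℕ} {F L : Type*} [Field F] [Fintype F] [Field L]
    [Algebra F L] {α₁ α₂ : L} {τ : Pair} {e : Pair →₀ F} {U : Pair → L}
    (hsetup : Setup q r₁ r₂ t α₁ α₂ τ e U)
{lt : Pair → Pair → Prop}
    (hord : (lt = LexLt ∧ LCond U t) ∨ (lt = GrLt ∧ GCond U t))
    {l : Pair} (hl : l ∈ Sset t)
    {d : ℕ} {f : Fin d → (Pair →₀ L)} {s : Fin d → Pair}
    (hmin : IsMinimalSet lt U l d f s)
    (hd0 : 0 < d) (hl2 : l.2 = 0)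
    (hb : t + (s ⟨0, hd0⟩).1 ≤ l.1) :
    evalArr U (f ⟨0, hd0⟩) (s ⟨0, hd0⟩) l = 0 := by
  classical
  obtain ⟨l1, l2⟩ := l
  simp only at hl2
  subst hl2
  obtain ⟨hcan, hτ1, hτ2, hU⟩ := hsetup.syndrome
  set f₀ := f ⟨0, hd0⟩ with hf₀
  set s₀ := s ⟨0, hd0⟩ with hs₀
  have hs2 : s₀.2 = 0 := hmin.first2 hd0
  have hgen := hmin.gen ⟨0, hd0⟩
  rw [← hf₀, ← hs₀] at hgen
  set c : Pair → L := fun a => algebraMap F L (e a) with hc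
  set γ : Pair → L := fun a =>
    c a * (∑ m ∈ f₀.support, f₀ m * (α₁ ^ a.1) ^ (τ.1 + m.1) * (α₂ ^ a.2) ^ (τ.2 + m.2))
    with hγ
  have hW : ∀ j : ℕ, evalArr U f₀ s₀ (s₀.1 + j, 0) =
      ∑ a ∈ e.support, γ a * (α₁ ^ a.1) ^ j := by
    intro j
    rw [evalArr, if_pos (show Preceq s₀ (s₀.1 + j, 0) from
      ⟨Nat.le_add_right _ _, by omega⟩)]
    have key : ∀ m ∈ f₀.support,
        f₀ m * U (m.1 + (s₀.1 + j, (0:ℕ)).1 - s₀.1, m.2 + (s₀.1 + j, (0:ℕ)).2 - s₀.2) =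
        ∑ a ∈ e.support,
          (c a * (f₀ m * (α₁ ^ a.1) ^ (τ.1 + m.1) * (α₂ ^ a.2) ^ (τ.2 + m.2)))
            * (α₁ ^ a.1) ^ j := by
      intro m _
      have h1 : m.1 + (s₀.1 + j, (0:ℕ)).1 - s₀.1 = m.1 + j := by omega
      have h2 : m.2 + (s₀.1 + j, (0:ℕ)).2 - s₀.2 = m.2 := by omega
      rw [h1, h2, hU, polyEval, Finset.mul_sum]
      refine Finset.sum_congr rfl fun a _ => ?_
      have e1 : (α₁ ^ (τ.1 + (m.1 + j))) ^ a.1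
          = (α₁ ^ a.1) ^ (τ.1 + m.1) * (α₁ ^ a.1) ^ j := by
        rw [← pow_mul, ← pow_mul, ← pow_mul, ← pow_add]
        congr 1; ring
      have e2 : (α₂ ^ (τ.2 + m.2)) ^ a.2 = (α₂ ^ a.2) ^ (τ.2 + m.2) := by
        rw [← pow_mul, ← pow_mul]; congr 1; ring
      rw [e1, e2]; ring
    rw [Finset.sum_congr rfl key, Finset.sum_comm]
    refine Finset.sum_congr rfl fun a _ => ?_
    simp only [hγ, Finset.mul_sum, Finset.sum_mul]
  set B : Finset L := e.support.image (fun a => α₁ ^ a.1) with hB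
  set δ : L → L := fun b => ∑ a ∈ e.support.filter (fun a => α₁ ^ a.1 = b), γ a with hδ
  have hgroup : ∀ j : ℕ, ∑ b ∈ B, δ b * b ^ j
      = ∑ a ∈ e.support, γ a * (α₁ ^ a.1) ^ j := by
    intro j
    rw [← Finset.sum_fiberwise_of_maps_to
      (fun a ha => Finset.mem_image_of_mem (fun a => α₁ ^ a.1) ha)
      (fun a => γ a * (α₁ ^ a.1) ^ j)]
    refine Finset.sum_congr rfl fun b _ => ?_
    rw [hδ, Finset.sum_mul]
    refine Finset.sum_congr rfl fun a ha => ?_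
    rw [(Finset.mem_filter.1 ha).2]
  have hcardB : B.card ≤ t := le_trans (Finset.card_image_le) hsetup.weight_le
  have hltkl : ∀ k₁ : ℕ, k₁ < l1 → lt (k₁, 0) (l1, 0) := by
    intro k₁ hk
    rcases hord with ⟨rfl, _⟩ | ⟨rfl, _⟩
    · exact Or.inl hk
    · exact Or.inl (by simpa using hk)
  have hvanish : ∀ j < B.card, ∑ b ∈ B, δ b * b ^ j = 0 := by
    intro j hj
    rw [hgroup, ← hW]
    exact hgen _ ⟨Nat.le_add_right _ _, by omega⟩
      (hltkl _ (by omega))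
  have hfin := vand_key B δ hvanish (l1 - s₀.1)
  rw [hgroup, ← hW] at hfin
  have hle : s₀.1 ≤ l1 := by omega
  have heq : ((s₀.1 + (l1 - s₀.1), (0:ℕ)) : Pair) = (l1, 0) := by
    congr 1; omega
  rwa [heq] at hfin


end BMS
end
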